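/- arXiv:2011.14895 — 2 statements merged into one kernel-verified Lean document; each statement's English description precedes it below -/
import Mathlib

section
/- For every x ∈ ℝ^{n_0} and every compatible activation pattern s ∈ S^C(x), the critical kernel equals the subjective critical kernel: Ker^C(x) = K̃er^C_s(x). -/
/-!
Formalization of the setting of "Deep ReLU Programming" (Hinz & van de Geer).

A feed-forward ReLU network with `L` hidden layers and widths `n 0, …, n (L+1)`
(`n (L+1) = 1` for a real-valued network) is encoded by the structure `Net L n`
below, where `W k : Matrix (Fin (n (k+1))) (Fin (n k)) ℝ` and
`b k : Fin (n (k+1)) → ℝ` are the weight matrix and bias vector of layer `k+1`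
(so the paper's `W_l, b_l` correspond to `W (l-1), b (l-1)` here).

A neuron `(l, j)` of the paper (layer `l ∈ {1, …, L}`, neuron `j`) is encoded as
the pair `⟨k, j⟩ : Idx n` with `k = l - 1`; membership in the index set `I`
corresponds to the condition `k < L`.
-/

noncomputable section
open Metric Filter Topology
open scoped Classical RealInnerProductSpace BigOperators

namespace DRLP

/-- Input space `ℝ^{n 0}` with the Euclidean metric and inner product. -/
abbrev Input (n : ℕ → ℕ) := EuclideanSpace ℝ (Fin (n 0))

/-- Patterns: one real number for each neuron `⟨k, j⟩` (neuron `j` of layer `k+1`). -/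
abbrev Pat (n : ℕ → ℕ) := ∀ k : ℕ, Fin (n (k+1)) → ℝ

/-- Neuron indices: `⟨k, j⟩` denotes neuron `j` of layer `k+1`. -/
abbrev Idx (n : ℕ → ℕ) := Σ k : ℕ, Fin (n (k+1))

/-- `s` is an activation pattern (element of `S = {0,1}^{n_1} × ⋯ × {0,1}^{n_L}`). -/
def IsPattern (L : ℕ) {n : ℕ → ℕ} (s : Pat n) : Prop :=
  ∀ k < L, ∀ j, s k j = 0 ∨ s k j = 1

/-- Compatibility of a (hyperplane) pattern `h` with an activation pattern `s`:
`h_{lj} (s_{lj} - 0.5) ≥ 0` for all neurons `(l,j) ∈ I`. -/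
def PatCompatible (L : ℕ) {n : ℕ → ℕ} (h s : Pat n) : Prop :=
  ∀ k < L, ∀ j, h k j * (s k j - 1/2) ≥ 0

/-- A feed-forward ReLU network with `L` hidden layers and widths `n 0, …, n (L+1)`. -/
structure Net (L : ℕ) (n : ℕ → ℕ) : Type where
  W : ∀ k : ℕ, Matrix (Fin (n (k+1))) (Fin (n k)) ℝ
  b : ∀ k : ℕ, Fin (n (k+1)) → ℝ

namespace Net

variable {L : ℕ} {n : ℕ → ℕ} (N : Net L n)

/-- Output of layer `k` (entrywise ReLU applied); layer `0` is the input itself. -/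
def hid (x : Input n) : (k : ℕ) → Fin (n k) → ℝ
  | 0 => fun i => x i
  | k + 1 => fun j => max ((N.W k).mulVec (hid x k) j + N.b k j) 0

/-- The ReLU arguments `A(x)`: pre-activation of neuron `j` in layer `k+1`. -/
def preact (x : Input n) (k : ℕ) (j : Fin (n (k+1))) : ℝ :=
  (N.W k).mulVec (N.hid x k) j + N.b k j

/-- The hyperplane pattern `H(x) = sign.(A(x))`. -/
def Hpat (x : Input n) (k : ℕ) (j : Fin (n (k+1))) : ℝ :=
  Real.sign (N.preact x k j)

/-- Subjective hidden layers: activations frozen to the pattern `s`. -/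
def shid (s : Pat n) (x : Input n) : (k : ℕ) → Fin (n k) → ℝ
  | 0 => fun i => x i
  | k + 1 => fun j => s k j * ((N.W k).mulVec (shid s x k) j + N.b k j)

/-- The subjective ReLU arguments `Ã_s(x)`. -/
def spreact (s : Pat n) (x : Input n) (k : ℕ) (j : Fin (n (k+1))) : ℝ :=
  (N.W k).mulVec (N.shid s x k) j + N.b k j

/-- The subjective hyperplane pattern `H̃_s(x) = sign.(Ã_s(x))`. -/
def sHpat (s : Pat n) (x : Input n) (k : ℕ) (j : Fin (n (k+1))) : ℝ :=
  Real.sign (N.spreact s x k j)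

/-- `S^C(x)`: activation patterns compatible with the hyperplane pattern `H(x)`. -/
def SC (x : Input n) : Set (Pat n) :=
  {s | IsPattern L s ∧ PatCompatible L (N.Hpat x) s}

/-- `S̃^C(x)`: activation patterns compatible with their own induced subjective
hyperplane pattern `H̃_s(x)`. -/
def SCtilde (x : Input n) : Set (Pat n) :=
  {s | IsPattern L s ∧ PatCompatible L (N.sHpat s x) s}

/-- `C(x)`: critical indices, i.e. neurons whose hyperplane pattern is non-constant in
every neighbourhood of `x`. -/
def Critical (x : Input n) (p : Idx n) : Prop :=
  p.1 < L ∧ ∀ ε > 0, ∃ y z : Input n, dist y x < ε ∧ dist z x < ε ∧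
    N.Hpat y p.1 p.2 ≠ N.Hpat z p.1 p.2

/-- `C̃_s(x)`: subjective critical indices. -/
def sCritical (s : Pat n) (x : Input n) (p : Idx n) : Prop :=
  p.1 < L ∧ ∀ ε > 0, ∃ y z : Input n, dist y x < ε ∧ dist z x < ε ∧
    N.sHpat s y p.1 p.2 ≠ N.sHpat s z p.1 p.2

/-- The critical kernel `Ker^C(x)`. -/
def KerC (x : Input n) : Set (Input n) :=
  {v | ∃ ε > 0, ∀ t : ℝ, |t| < ε → ∀ p : Idx n, p.1 < L →
    N.Hpat (x + t • v) p.1 p.2 = N.Hpat x p.1 p.2}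

/-- The subjective critical kernel `K̃er^C_s(x)`. -/
def sKerC (s : Pat n) (x : Input n) : Set (Input n) :=
  {v | ∃ ε > 0, ∀ t : ℝ, |t| < ε → ∀ p : Idx n, p.1 < L →
    N.sHpat s (x + t • v) p.1 p.2 = N.sHpat s x p.1 p.2}

/-- Critical degrees of freedom `df^C(x) = dim Ker^C(x)`. -/
def dfC (x : Input n) : ℕ :=
  Module.finrank ℝ (Submodule.span ℝ (N.KerC x))

/-- `x` is a vertex iff `df^C(x) = 0`. -/
def IsVertex (x : Input n) : Prop := N.dfC x = 0

/-- The matrix `W_{k+1} diag(s_k) W_k ⋯ diag(s_1) W_1`. -/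
def sMat (s : Pat n) : (k : ℕ) → Matrix (Fin (n (k+1))) (Fin (n 0)) ℝ
  | 0 => N.W 0
  | k + 1 => N.W (k+1) * Matrix.diagonal (s k) * sMat s k

/-- The normal vector `ṽ_{s,l,j}` (transpose of the `j`-th row of
`W_l diag(s_{l-1}) ⋯ diag(s_1) W_1`). -/
def nvec (s : Pat n) (p : Idx n) : Input n :=
  WithLp.toLp 2 (fun i => N.sMat s p.1 p.2 i)

/-- The oriented normal vector `ũ_{s,l,j}`. -/
def onvec (s : Pat n) (p : Idx n) : Input n :=
  if s p.1 p.2 = 1 then N.nvec s p else -N.nvec s p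

/-- The gradient `∇_s = (W_{L+1} diag(s_L) ⋯ diag(s_1) W_1)ᵀ ∈ ℝ^{n_0}`. -/
def grad (h1 : n (L+1) = 1) (s : Pat n) : Input n :=
  N.nvec s ⟨L, Fin.cast h1.symm 0⟩

/-- The (real-valued) network function `f`. -/
def fnet (h1 : n (L+1) = 1) (x : Input n) : ℝ :=
  N.preact x L (Fin.cast h1.symm 0)

/-- The subjective network function `f̃_s`. -/
def sfnet (h1 : n (L+1) = 1) (s : Pat n) (x : Input n) : ℝ :=
  N.spreact s x L (Fin.cast h1.symm 0)

/-- The feasible directions `D̃_s(x)`. -/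
def Dfeas (s : Pat n) (x : Input n) : Set (Input n) :=
  {v | ∃ ε > 0, s ∈ N.SC (x + ε • v)}

/-- `x` is a regular point: for every compatible activation pattern `s ∈ S^C(x)`, the
normal vectors at the subjective critical indices are linearly independent. -/
def RegularPoint (x : Input n) : Prop :=
  ∀ s ∈ N.SC x, LinearIndependent ℝ
    (fun p : {p : Idx n // N.sCritical s x p} => N.nvec s p.1)

/-- The network is regular if every point is a regular point. -/
def Regular : Prop := ∀ x : Input n, N.RegularPoint x

/-- `w` is the feasible axis `ã_{x,s,l,j}` at `x` for the activation pattern `s` and the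
critical index `p = (l,j)`: it pairs to `1` with the oriented normal vector of `p` and
to `0` with the oriented normal vectors of all other critical indices of `x`. -/
def IsAxis (x : Input n) (s : Pat n) (p : Idx n) (w : Input n) : Prop :=
  ∀ q : Idx n, N.Critical x q → ⟪w, N.onvec s q⟫ = if p = q then 1 else 0

/-- The region separating axes `𝒜(x)`. -/
def RegionSepAxes (x : Input n) : Set (Input n) :=
  {w | ∃ s ∈ N.SC x, ∃ p : Idx n, N.Critical x p ∧ N.IsAxis x s p w}

end Net

/-!
Once an activation pattern `s` is compatible with the hyperplane pattern at a point `y`,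
freezing the activations to `s` does not change the network at `y`: on `{0,1}`-patterns,
compatibility says exactly that `s · a = ReLU a` for every pre-activation `a`, so by induction
over the layers the subjective and the true ReLU arguments agree, and hence `H̃_s(y) = H(y)`.
The same induction works if `s` is only assumed compatible with its own subjective pattern
`H̃_s(y)`, since at each layer that pattern coincides with `H(y)` as long as the earlier layers
agree. Near `x`, moving along a kernel direction of one pattern keeps it equal to its value
at `x`, hence compatible with `s`, so the other pattern agrees with it there and is constant too.
-/

lemma mul_eq_max_zero_of_sign_mul_nonneg {a t : ℝ} (ht : t = 0 ∨ t = 1)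
    (h : Real.sign a * (t - 1/2) ≥ 0) : t * a = max a 0 := by
  rcases ht with rfl | rfl
  · have ha : a ≤ 0 := by
      by_contra! ha
      rw [Real.sign_of_pos ha] at h
      norm_num at h
    simp [max_eq_right ha]
  · have ha : 0 ≤ a := by
      by_contra! ha
      rw [Real.sign_of_neg ha] at h
      norm_num at h
    simp [max_eq_left ha]

lemma PatCompatible.congr {L : ℕ} {n : ℕ → ℕ} {h h' s : Pat n} (hc : PatCompatible L h s)
    (heq : ∀ k < L, h' k = h k) : PatCompatible L h' s := by
  intro k hk j
  rw [heq k hk]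
  exact hc k hk j

def patKer (L : ℕ) {n : ℕ → ℕ} (F : Input n → Pat n) (x : Input n) : Set (Input n) :=
  {v | ∃ ε > 0, ∀ t : ℝ, |t| < ε → ∀ p : Idx n, p.1 < L → F (x + t • v) p.1 p.2 = F x p.1 p.2}

lemma patKer_subset_of_eq_of_compatible {L : ℕ} {n : ℕ → ℕ} {F G : Input n → Pat n}
    {s : Pat n} {x : Input n} (hx : PatCompatible L (F x) s)
    (hFG : ∀ y, PatCompatible L (F y) s → ∀ k < L, G y k = F y k) :
    patKer L F x ⊆ patKer L G x := by
  rintro v ⟨ε, hε, hconst⟩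
  refine ⟨ε, hε, fun t ht p hp => ?_⟩
  have hFt : ∀ k < L, F (x + t • v) k = F x k := fun k hk =>
    funext fun j => hconst t ht ⟨k, j⟩ hk
  rw [hFG _ (hx.congr hFt) p.1 hp, hFG x hx p.1 hp, hFt p.1 hp]

namespace Net

variable {L : ℕ} {n : ℕ → ℕ} (N : Net L n)

lemma sHpat_eq_Hpat_of_shid_eq {s : Pat n} {y : Input n} {k : ℕ}
    (h : N.shid s y k = N.hid y k) : N.sHpat s y k = N.Hpat y k := by
  funext j
  simp only [sHpat, Hpat, spreact, preact, h]

lemma shid_eq_hid_of_compatible {s : Pat n} (hs : IsPattern L s) {y : Input n}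
    (hc : ∀ k < L, N.shid s y k = N.hid y k → ∀ j, N.Hpat y k j * (s k j - 1/2) ≥ 0) :
    ∀ k ≤ L, N.shid s y k = N.hid y k := by
  intro k
  induction k with
  | zero => exact fun _ => rfl
  | succ k ih =>
    intro hk
    have hprev := ih (Nat.le_of_succ_le hk)
    funext j
    change s k j * ((N.W k).mulVec (N.shid s y k) j + N.b k j) = max (N.preact y k j) 0
    rw [hprev]
    exact mul_eq_max_zero_of_sign_mul_nonneg (hs k hk j) (hc k hk hprev j)

lemma sHpat_eq_Hpat_of_compatible {s : Pat n} (hs : IsPattern L s) {y : Input n}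
    (hc : PatCompatible L (N.Hpat y) s) : ∀ k < L, N.sHpat s y k = N.Hpat y k :=
  fun k hk => N.sHpat_eq_Hpat_of_shid_eq <|
    N.shid_eq_hid_of_compatible hs (fun k hk _ => hc k hk) k hk.le

lemma sHpat_eq_Hpat_of_sCompatible {s : Pat n} (hs : IsPattern L s) {y : Input n}
    (hc : PatCompatible L (N.sHpat s y) s) : ∀ k < L, N.sHpat s y k = N.Hpat y k :=
  fun k hk => N.sHpat_eq_Hpat_of_shid_eq <| N.shid_eq_hid_of_compatible hs
    (fun k hk heq => N.sHpat_eq_Hpat_of_shid_eq heq ▸ hc k hk) k hk.le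

end Net

/-- Lemma 2: for every `x` and every compatible `s ∈ S^C(x)`, the critical
kernel equals the subjective critical kernel: `Ker^C(x) = K̃er^C_s(x)`. -/
theorem statement5 {L : ℕ} {n : ℕ → ℕ} (N : Net L n) (x : Input n) (s : Pat n)
    (hs : s ∈ N.SC x) :
    N.KerC x = N.sKerC s x := by
  obtain ⟨hpat, hcompat⟩ := hs
  have hscompat : PatCompatible L (N.sHpat s x) s :=
    hcompat.congr (N.sHpat_eq_Hpat_of_compatible hpat hcompat)
  change patKer L N.Hpat x = patKer L (N.sHpat s) x
  exact (patKer_subset_of_eq_of_compatible hcompat fun y hy =>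
      N.sHpat_eq_Hpat_of_compatible hpat hy).antisymm
    (patKer_subset_of_eq_of_compatible hscompat fun y hy k hk =>
      (N.sHpat_eq_Hpat_of_sCompatible hpat hy k hk).symm)

end DRLP
end
end

section
/- For every x ∈ ℝ^{n_0}, every compatible activation pattern s ∈ S^C(x), every subjective critical index (l,j) ∈ C̃_s(x) and every v ∈ ℝ^{n_0}, it holds that Ã_s(x+v)_{lj} = ⟨v, ṽ_{s,l,j}⟩. -/
/-!
Formalization of the setting of "Deep ReLU Programming" (Hinz & van de Geer).

A feed-forward ReLU network with `L` hidden layers and widths `n 0, …, n (L+1)`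
(`n (L+1) = 1` for a real-valued network) is encoded by the structure `Net L n`
below, where `W k : Matrix (Fin (n (k+1))) (Fin (n k)) ℝ` and
`b k : Fin (n (k+1)) → ℝ` are the weight matrix and bias vector of layer `k+1`
(so the paper's `W_l, b_l` correspond to `W (l-1), b (l-1)` here).

A neuron `(l, j)` of the paper (layer `l ∈ {1, …, L}`, neuron `j`) is encoded as
the pair `⟨k, j⟩ : Idx n` with `k = l - 1`; membership in the index set `I`
corresponds to the condition `k < L`.
-/

noncomputable section
open Metric Filter Topology
open scoped Classical RealInnerProductSpace BigOperators

namespace DRLP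

namespace Net

variable {L : ℕ} {n : ℕ → ℕ} (N : Net L n)

/-!
With the activation pattern frozen, each subjective pre-activation is an affine function of the
input whose linear part is the normal vector. At a subjective critical index this function
vanishes at `x`: otherwise, by continuity, its sign would be constant near `x`.
-/

open Matrix

variable (s : Pat n)

/-- The linear part of `x ↦ N.shid s x k`. -/
def shidMat : (k : ℕ) → Matrix (Fin (n k)) (Fin (n 0)) ℝ
  | 0 => 1
  | k + 1 => diagonal (s k) * N.sMat s k

lemma sMat_eq_W_mul_shidMat : ∀ k, N.sMat s k = N.W k * N.shidMat s k
  | 0 => by simp [sMat, shidMat]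
  | k + 1 => by simp [sMat, shidMat, Matrix.mul_assoc]

lemma W_mulVec_add_shidMat_mulVec (k : ℕ) (y : Fin (n k) → ℝ) (v : Input n) :
    N.W k *ᵥ (y + N.shidMat s k *ᵥ v) = N.W k *ᵥ y + N.sMat s k *ᵥ v := by
  rw [mulVec_add, mulVec_mulVec, N.sMat_eq_W_mul_shidMat]

lemma shid_add (x v : Input n) :
    ∀ k, N.shid s (x + v) k = N.shid s x k + N.shidMat s k *ᵥ v
  | 0 => by ext i; simp [shid, shidMat]
  | k + 1 => by
    ext j
    simp only [shid, shid_add x v k, W_mulVec_add_shidMat_mulVec, Pi.add_apply]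
    rw [shidMat, ← mulVec_mulVec, mulVec_diagonal]
    ring

lemma spreact_add (x v : Input n) (k : ℕ) (j : Fin (n (k+1))) :
    N.spreact s (x + v) k j = N.spreact s x k j + (N.sMat s k *ᵥ v) j := by
  simp only [spreact, shid_add, W_mulVec_add_shidMat_mulVec, Pi.add_apply]
  ring

lemma continuous_spreact (k : ℕ) (j : Fin (n (k+1))) :
    Continuous fun y : Input n => N.spreact s y k j := by
  have hlin : Continuous fun y : Input n => (N.sMat s k *ᵥ y) j :=
    (continuous_apply j).comp (continuous_const.matrix_mulVec (PiLp.continuous_ofLp 2 _))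
  have hsplit : (fun y : Input n => N.spreact s y k j)
      = fun y : Input n => N.spreact s 0 k j + (N.sMat s k *ᵥ y) j :=
    funext fun y => by simpa using N.spreact_add s 0 y k j
  exact hsplit ▸ continuous_const.add hlin

lemma sHpat_eventually_eq {x : Input n} {k : ℕ} {j : Fin (n (k+1))}
    (h : N.spreact s x k j ≠ 0) : ∀ᶠ y in 𝓝 x, N.sHpat s y k j = N.sHpat s x k j := by
  have hcont := (N.continuous_spreact s k j).continuousAt (x := x)
  rcases h.lt_or_gt with hneg | hpos
  · filter_upwards [hcont.eventually_lt continuousAt_const hneg] with y hy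
    rw [sHpat, sHpat, Real.sign_of_neg hy, Real.sign_of_neg hneg]
  · filter_upwards [continuousAt_const.eventually_lt hcont hpos] with y hy
    rw [sHpat, sHpat, Real.sign_of_pos hy, Real.sign_of_pos hpos]

lemma spreact_eq_zero_of_sCritical {x : Input n} {p : Idx n} (hp : N.sCritical s x p) :
    N.spreact s x p.1 p.2 = 0 := by
  by_contra h
  obtain ⟨ε, hε, hball⟩ := Metric.eventually_nhds_iff.1 (N.sHpat_eventually_eq s h)
  obtain ⟨y, z, hy, hz, hne⟩ := hp.2 ε hε
  exact hne ((hball hy).trans (hball hz).symm)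

lemma inner_nvec (v : Input n) (p : Idx n) : ⟪v, N.nvec s p⟫ = (N.sMat s p.1 *ᵥ v) p.2 := by
  simp only [mulVec, dotProduct, nvec, PiLp.inner_apply, RCLike.inner_apply, conj_trivial]

end Net

theorem statement9_general {L : ℕ} {n : ℕ → ℕ} (N : Net L n) (x : Input n) (s : Pat n)
    (p : Idx n) (hp : N.sCritical s x p) (v : Input n) :
    N.spreact s (x + v) p.1 p.2 = ⟪v, N.nvec s p⟫ := by
  rw [N.spreact_add s x v, N.spreact_eq_zero_of_sCritical s hp, zero_add, N.inner_nvec]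

/-- Lemma 6: for `x`, `s ∈ S^C(x)`, `(l,j) ∈ C̃_s(x)` and `v ∈ ℝ^{n_0}`,
`Ã_s(x+v)_{lj} = ⟨v, ṽ_{s,l,j}⟩`. -/
theorem statement9 {L : ℕ} {n : ℕ → ℕ} (N : Net L n) (x : Input n) (s : Pat n)
    (hs : s ∈ N.SC x) (p : Idx n) (hp : N.sCritical s x p) (v : Input n) :
    N.spreact s (x + v) p.1 p.2 = ⟪v, N.nvec s p⟫ :=
  statement9_general N x s p hp v

end DRLP
end
end
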